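/- arXiv:2512.24999 — 2 statements merged into one kernel-verified Lean document; each statement's English description precedes it below -/
import Mathlib

section
/- Let f : ℝ^d → ℝ be convex, differentiable, and L-smooth for some L > 0, and let (θ_t) be gradient descent iterates θ_{t+1} = θ_t − η_t ∇f(θ_t) with step sizes η_t ∈ (0, 1/L]. If Σ_{t=0}^∞ η_t = ∞, then f(θ_t) converges as t → ∞ to inf_{θ ∈ ℝ^d} f(θ) (an element of [−∞, ∞); in particular f(θ_t) → −∞ when the infimum is −∞). -/
/-!
Smoothness gives the descent lemma, so a step of size `η ≤ 1/L` lowers `f` by at least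
`η/2 ‖∇f‖²`. Together with the first-order convexity inequality this makes
`‖θ T - z‖² + 2 (∑_{t<T} η t) (f (θ T) - f z)` non-increasing for every `z`, whence
`f (θ T) - f z ≤ ‖θ 0 - z‖² / (2 ∑_{t<T} η t) → 0`. As `f (θ t)` is non-increasing, its limit
in `EReal` is its infimum, which is therefore at most every `f z`.
-/

open Finset Filter Topology AffineMap
open scoped RealInnerProductSpace

variable {E : Type*} [NormedAddCommGroup E] [InnerProductSpace ℝ E] [CompleteSpace E] {f : E → ℝ}

theorem hasDerivAt_comp_lineMap {x y : E} {s : ℝ} (hf : DifferentiableAt ℝ f (lineMap x y s)) :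
    HasDerivAt (f ∘ lineMap x y) ⟪gradient f (lineMap x y s), y - x⟫ s := by
  rw [inner_gradient_left]
  exact hf.hasFDerivAt.comp_hasDerivAt s hasDerivAt_lineMap

theorem ConvexOn.add_inner_gradient_le (hconv : ConvexOn ℝ Set.univ f) {x : E}
    (hf : DifferentiableAt ℝ f x) (y : E) :
    f x + ⟪gradient f x, y - x⟫ ≤ f y := by
  have hline : ConvexOn ℝ Set.univ (f ∘ lineMap (k := ℝ) x y) :=
    hconv.comp_affineMap (lineMap x y)
  have hderiv : HasDerivAt (f ∘ lineMap x y) ⟪gradient f x, y - x⟫ (0 : ℝ) := by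
    simpa only [lineMap_apply_zero] using
      hasDerivAt_comp_lineMap (x := x) (y := y) (s := 0) (by rwa [lineMap_apply_zero])
  have := hline.le_slope_of_hasDerivAt (Set.mem_univ 0) (Set.mem_univ 1) zero_lt_one hderiv
  simp only [slope_def_field, Function.comp_apply, lineMap_apply_one, lineMap_apply_zero,
    sub_zero, div_one] at this
  linarith

theorem le_add_inner_gradient_add_sq_of_lipschitz {L : ℝ} (hf : Differentiable ℝ f)
    (hsmooth : ∀ x y : E, ‖gradient f x - gradient f y‖ ≤ L * ‖x - y‖) (x y : E) :
    f y ≤ f x + ⟪gradient f x, y - x⟫ + L / 2 * ‖y - x‖ ^ 2 := by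
  set g := ⟪gradient f x, y - x⟫
  set ψ : ℝ → ℝ := fun s => (f ∘ lineMap x y) s - s * g - L / 2 * ‖y - x‖ ^ 2 * s ^ 2
  have hψ : ∀ s, HasDerivAt ψ
      (⟪gradient f (lineMap x y s), y - x⟫ - g - L / 2 * ‖y - x‖ ^ 2 * (2 * s)) s := fun s =>
    ((hasDerivAt_comp_lineMap (hf _)).sub (hasDerivAt_mul_const g)).sub
      (by simpa using (hasDerivAt_pow 2 s).const_mul (L / 2 * ‖y - x‖ ^ 2))
  have hanti : AntitoneOn ψ (Set.Icc 0 1) := by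
    refine antitoneOn_of_hasDerivWithinAt_nonpos (convex_Icc 0 1)
      (fun s _ => (hψ s).continuousAt.continuousWithinAt) (fun s _ => (hψ s).hasDerivWithinAt)
      fun s hs => ?_
    rw [interior_Icc] at hs
    have hdist : ‖lineMap x y s - x‖ = s * ‖y - x‖ := by
      rw [← dist_eq_norm, dist_lineMap_left, Real.norm_of_nonneg hs.1.le, dist_eq_norm']
    have := calc ⟪gradient f (lineMap x y s) - gradient f x, y - x⟫
        ≤ ‖gradient f (lineMap x y s) - gradient f x‖ * ‖y - x‖ := real_inner_le_norm _ _
      _ ≤ L * ‖lineMap x y s - x‖ * ‖y - x‖ := by gcongr; exact hsmooth _ _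
      _ = L * ‖y - x‖ ^ 2 * s := by rw [hdist]; ring
    rw [inner_sub_left] at this
    linarith
  have h01 := hanti (Set.left_mem_Icc.2 zero_le_one) (Set.right_mem_Icc.2 zero_le_one) zero_le_one
  simp only [ψ, Function.comp_apply, lineMap_apply_zero, lineMap_apply_one] at h01
  linarith

section GradientStep

variable {L η : ℝ} (hf : Differentiable ℝ f)
  (hsmooth : ∀ x y : E, ‖gradient f x - gradient f y‖ ≤ L * ‖x - y‖) (hη : 0 ≤ η) (hηL : η * L ≤ 1)
include hf hsmooth hη hηL

theorem apply_sub_smul_gradient_le (x : E) :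
    f (x - η • gradient f x) ≤ f x - η / 2 * ‖gradient f x‖ ^ 2 := by
  have hdescent := le_add_inner_gradient_add_sq_of_lipschitz hf hsmooth x (x - η • gradient f x)
  rw [sub_sub_cancel_left, inner_neg_right, real_inner_smul_right, real_inner_self_eq_norm_sq,
    norm_neg, norm_smul, Real.norm_of_nonneg hη] at hdescent
  have hslack : 0 ≤ η * ‖gradient f x‖ ^ 2 * (1 - η * L) :=
    mul_nonneg (mul_nonneg hη (sq_nonneg _)) (by linarith)
  nlinarith

theorem norm_sub_smul_gradient_sub_sq_le (hconv : ConvexOn ℝ Set.univ f) (x z : E) :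
    ‖x - η • gradient f x - z‖ ^ 2
      ≤ ‖x - z‖ ^ 2 - 2 * η * (f (x - η • gradient f x) - f z) := by
  have hfirst := hconv.add_inner_gradient_le (hf x) z
  have hstep := apply_sub_smul_gradient_le hf hsmooth hη hηL x
  rw [← neg_sub x z, inner_neg_right] at hfirst
  rw [sub_right_comm, norm_sub_sq_real, real_inner_smul_right, norm_smul,
    Real.norm_of_nonneg hη, real_inner_comm]
  nlinarith [mul_le_mul_of_nonneg_left hfirst hη]

end GradientStep

section GradientDescent

variable {L : ℝ} {η : ℕ → ℝ} {θ : ℕ → E} (hf : Differentiable ℝ f)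
  (hsmooth : ∀ x y : E, ‖gradient f x - gradient f y‖ ≤ L * ‖x - y‖)
  (hη : ∀ t, 0 ≤ η t) (hηL : ∀ t, η t * L ≤ 1)
  (hupd : ∀ t, θ (t + 1) = θ t - η t • gradient f (θ t))
include hf hsmooth hη hηL hupd

theorem antitone_comp_gradientDescent : Antitone (f ∘ θ) := by
  refine antitone_nat_of_succ_le fun t => ?_
  have hstep := apply_sub_smul_gradient_le hf hsmooth (hη t) (hηL t) (θ t)
  rw [Function.comp_apply, Function.comp_apply, hupd t]
  nlinarith [mul_nonneg (hη t) (sq_nonneg ‖gradient f (θ t)‖)]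

theorem norm_sub_sq_add_sum_mul_le (hconv : ConvexOn ℝ Set.univ f) (z : E) (T : ℕ) :
    ‖θ T - z‖ ^ 2 + 2 * (∑ t ∈ range T, η t) * (f (θ T) - f z) ≤ ‖θ 0 - z‖ ^ 2 := by
  induction T with
  | zero => simp
  | succ T ih =>
    have hdist := norm_sub_smul_gradient_sub_sq_le hf hsmooth (hη T) (hηL T) hconv (θ T) z
    have hmono : f (θ (T + 1)) ≤ f (θ T) :=
      antitone_comp_gradientDescent hf hsmooth hη hηL hupd T.le_succ
    have hsum : 0 ≤ ∑ t ∈ range T, η t := sum_nonneg fun t _ => hη t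
    rw [← hupd T] at hdist
    rw [sum_range_succ]
    nlinarith [mul_le_mul_of_nonneg_left hmono hsum]

theorem tendsto_comp_gradientDescent_iInf (hconv : ConvexOn ℝ Set.univ f)
    (hdiv : Tendsto (fun T => ∑ t ∈ range T, η t) atTop atTop) :
    Tendsto (fun t => (f (θ t) : EReal)) atTop (𝓝 (⨅ x, (f x : EReal))) := by
  have hanti : Antitone (fun t => (f (θ t) : EReal)) := fun s t hst =>
    EReal.coe_le_coe (antitone_comp_gradientDescent hf hsmooth hη hηL hupd hst)
  convert tendsto_atTop_iInf hanti using 2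
  refine le_antisymm (le_iInf fun t => iInf_le _ (θ t)) (le_iInf fun z => ?_)
  have hgap : Tendsto (fun T => f z + ‖θ 0 - z‖ ^ 2 / (2 * ∑ t ∈ range T, η t)) atTop
      (𝓝 (f z)) := by
    simpa using tendsto_const_nhds.add
      (tendsto_const_nhds.div_atTop (hdiv.const_mul_atTop two_pos))
  refine le_of_tendsto_of_tendsto (tendsto_atTop_iInf hanti) (EReal.tendsto_coe.2 hgap) ?_
  filter_upwards [hdiv.eventually_gt_atTop 0] with T hT
  have := norm_sub_sq_add_sum_mul_le hf hsmooth hη hηL hupd hconv z T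
  rw [EReal.coe_le_coe_iff, ← sub_le_iff_le_add', le_div_iff₀ (by positivity)]
  nlinarith [sq_nonneg ‖θ T - z‖]

end GradientDescent

/-- **Asymptotic training loss of gradient descent.**
For convex, differentiable, `L`-smooth `f` and gradient descent iterates with step sizes
`η t ∈ (0, 1/L]` satisfying `Σ η t = ∞`, the values `f (θ t)` converge (in the extended
reals, so that the case `inf f = -∞` is included) to `⨅ θ, f θ`. -/
theorem gd_asymptotic_training_loss {d : ℕ} (f : EuclideanSpace ℝ (Fin d) → ℝ)
    (L : ℝ) (hL : 0 < L)
    (hconv : ConvexOn ℝ Set.univ f) (hdiff : Differentiable ℝ f)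
    (hsmooth : ∀ x y : EuclideanSpace ℝ (Fin d),
      ‖gradient f x - gradient f y‖ ≤ L * ‖x - y‖)
    (η : ℕ → ℝ) (hη : ∀ t, 0 < η t ∧ η t ≤ 1 / L)
    (θ : ℕ → EuclideanSpace ℝ (Fin d))
    (hupd : ∀ t, θ (t + 1) = θ t - η t • gradient f (θ t))
    (hdiv : Tendsto (fun T => ∑ t ∈ Finset.range T, η t) atTop atTop) :
    Tendsto (fun t => (f (θ t) : EReal)) atTop
      (nhds (⨅ x : EuclideanSpace ℝ (Fin d), (f x : EReal))) :=
  tendsto_comp_gradientDescent_iInf hdiff hsmooth (fun t => (hη t).1.le)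
    (fun t => (le_div_iff₀ hL).1 (hη t).2) hupd hconv hdiv
end

section
/- Fix X ∈ ℝ^{n×d}, vectors Y, μ ∈ ℝ^n, and set ε := Y − μ. Let A : ℝ → ℝ be convex, ℓ(θ) := (1/n)(−YᵀXθ + Σ_i A((Xθ)_i)), Risk(θ) := (1/n)(−μᵀXθ + Σ_i A((Xθ)_i)), and assume ℓ is L-smooth with respect to ‖·‖₁ on the probability simplex Δ_d. Let (θ_t) be exponentiated gradient descent iterates for ℓ, initialized at θ_0 ∈ int(Δ_d) with constant step size η ∈ (0, 1/L], and set λ_T := 1/(ηT). Then for every integer T ≥ 1 and every θ ∈ Δ_d with D_KL(θ, θ_0) < ∞: Risk(θ_T) − Risk(θ) ≤ (1/(2λ_T))‖Xᵀε/n‖_∞² + λ_T D_KL(θ, θ_0). -/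
/-!
Exponentiated gradient descent is mirror descent on the simplex with the entropy mirror map.
By Pinsker's inequality, `η ≤ 1/L` lets `KL(θ_{t+1}, θ_t)` absorb the quadratic term of the
`ℓ₁` descent lemma; together with convexity and the three-point identity of the KL divergence
this gives `η (ℓ(θ_{t+1}) − ℓ(u)) ≤ KL(u, θ_t) − KL(u, θ_{t+1})`. The loss decreases along the
iterates, so telescoping yields `ηT (ℓ(θ_T) − ℓ(θ)) ≤ KL(θ, θ_0) − KL(θ, θ_T)`. Finally
`Risk − ℓ` is the linear noise term `θ ↦ ⟪Xᵀε/n, θ⟫`; Hölder, Pinsker and Young bound its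
increment by `(ηT/2) ‖Xᵀε/n‖_∞² + KL(θ, θ_T)/(ηT)`, and the last summand cancels.
-/

open Finset

/-- The GLM objective `(1/n) (−Yᵀ(Xθ) + Σ_i A((Xθ)_i))`. -/
noncomputable def glmObj {n d : ℕ} (X : Matrix (Fin n) (Fin d) ℝ) (Y : Fin n → ℝ)
    (A : ℝ → ℝ) (θ : Fin d → ℝ) : ℝ :=
  (1 / (n : ℝ)) * (-(∑ i, Y i * X.mulVec θ i) + ∑ i, A (X.mulVec θ i))

/-- The probability simplex `Δ_d = {a : a_i ≥ 0, Σ a_i = 1}`. -/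
def probSimplex (d : ℕ) : Set (Fin d → ℝ) :=
  {a | (∀ i, 0 ≤ a i) ∧ ∑ i, a i = 1}

/-- Kullback–Leibler divergence `Σ_i a_i log(a_i / b_i)` (with `0 · log 0 = 0`). -/
noncomputable def klDiv' {d : ℕ} (a b : Fin d → ℝ) : ℝ :=
  ∑ i, a i * Real.log (a i / b i)

/-- The gradient of `g : ℝ^d → ℝ` in coordinates, `(∇g(x))_j = (Dg(x))(e_j)`. -/
noncomputable def piGrad {d : ℕ} (g : (Fin d → ℝ) → ℝ) (x : Fin d → ℝ) : Fin d → ℝ :=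
  fun j => fderiv ℝ g x (Pi.single j 1)

open Real

theorem three_mul_sq_div_le_mul_log_sub_add_one {t : ℝ} (ht : 0 ≤ t) :
    3 * (t - 1) ^ 2 / (2 * (t + 2)) ≤ t * log t - t + 1 := by
  rcases ht.eq_or_lt with rfl | ht
  · norm_num
  set g : ℝ → ℝ := fun s => s * log s - s + 1 - 3 * (s - 1) ^ 2 / (2 * (s + 2))
  set g' : ℝ → ℝ := fun s => log s - 3 * (s - 1) * (s + 5) / (2 * (s + 2) ^ 2)
  have hg : ∀ s ∈ Set.Ioi (0 : ℝ), HasDerivAt g (g' s) s := by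
    intro s (hs : 0 < s)
    have := (((hasDerivAt_mul_log hs.ne').fun_sub (hasDerivAt_id' s)).add_const 1).fun_sub
      ((((hasDerivAt_id' s).sub_const 1).fun_pow 2 |>.const_mul 3).fun_div
        (((hasDerivAt_id' s).add_const 2).const_mul 2) (by positivity))
    exact this.congr_deriv (by simp only [g']; field_simp; ring)
  have hg' : ∀ s ∈ Set.Ioi (0 : ℝ), HasDerivAt g' (1 / s - 27 / (s + 2) ^ 3) s := by
    intro s (hs : 0 < s)
    have := (hasDerivAt_log hs.ne').fun_sub
      (((((hasDerivAt_id' s).sub_const 1).const_mul 3).fun_mul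
        ((hasDerivAt_id' s).add_const 5)).fun_div
        ((((hasDerivAt_id' s).add_const 2).fun_pow 2).const_mul 2) (by positivity))
    exact this.congr_deriv (by field_simp; ring)
  -- `g'' ≥ 0` is AM-GM for `s, 1, 1`: `(s + 2)³ ≥ 27 s`.
  have hconv : ConvexOn ℝ (Set.Ioi 0) g := by
    refine convexOn_of_hasDerivWithinAt2_nonneg (convex_Ioi 0) (f' := g')
      (f'' := fun s => 1 / s - 27 / (s + 2) ^ 3)
      (fun s hs => (hg s hs).continuousAt.continuousWithinAt) ?_ ?_ ?_ <;>
      rw [interior_Ioi] <;> intro s hs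
    · exact (hg s hs).hasDerivWithinAt
    · exact (hg' s hs).hasDerivWithinAt
    · have hs : (0 : ℝ) < s := hs
      rw [sub_nonneg, div_le_div_iff₀ (by positivity) (by positivity)]
      nlinarith [sq_nonneg (s - 1)]
  have hmin : IsMinOn g (Set.Ioi 0) 1 := by
    refine hconv.isMinOn_of_rightDeriv_eq_zero (by simp) ?_
    rw [((hg 1 (Set.mem_Ioi.2 one_pos)).hasDerivWithinAt).derivWithin (uniqueDiffWithinAt_Ioi 1)]
    norm_num [g']
  have := hmin ht
  norm_num [g] at this
  linarith

theorem three_mul_sq_div_le_mul_log_div {p q : ℝ} (hp : 0 ≤ p) (hq : 0 < q) :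
    3 * (p - q) ^ 2 / (2 * (p + 2 * q)) ≤ p * log (p / q) - p + q := by
  have h := mul_le_mul_of_nonneg_left
    (three_mul_sq_div_le_mul_log_sub_add_one (div_nonneg hp hq.le)) hq.le
  have e₁ : q * (3 * (p / q - 1) ^ 2 / (2 * (p / q + 2)))
      = 3 * (p - q) ^ 2 / (2 * (p + 2 * q)) := by
    field_simp
  have e₂ : q * (p / q * log (p / q) - p / q + 1) = p * log (p / q) - p + q := by
    field_simp
  rwa [e₁, e₂] at h

theorem sq_sum_abs_sub_le_two_mul_klDiv' {d : ℕ} {a b : Fin d → ℝ} (ha : a ∈ probSimplex d)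
    (hb : b ∈ probSimplex d) (hb₀ : ∀ i, 0 < b i) :
    (∑ i, |a i - b i|) ^ 2 ≤ 2 * klDiv' a b := by
  have hw : ∀ i ∈ univ, 0 < a i + 2 * b i := fun i _ => by linarith [ha.1 i, hb₀ i]
  have hw₃ : ∑ i, (a i + 2 * b i) = 3 := by
    rw [sum_add_distrib, ← mul_sum, ha.2, hb.2]; norm_num
  -- Cauchy–Schwarz with weights `a i + 2 b i`, then the pointwise bound.
  have hcs := sq_sum_div_le_sum_sq_div univ (fun i => |a i - b i|) hw
  have hpt : ∑ i, |a i - b i| ^ 2 / (a i + 2 * b i) ≤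
      ∑ i, 2 / 3 * (a i * log (a i / b i) - a i + b i) := by
    refine sum_le_sum fun i _ => ?_
    have := three_mul_sq_div_le_mul_log_div (ha.1 i) (hb₀ i)
    rw [mul_div_mul_comm] at this
    rw [sq_abs]
    linarith
  have hkl : ∑ i, 2 / 3 * (a i * log (a i / b i) - a i + b i) = 2 / 3 * klDiv' a b := by
    rw [← mul_sum, sum_add_distrib, sum_sub_distrib, ha.2, hb.2, klDiv']
    ring
  rw [hw₃] at hcs
  rw [hkl] at hpt
  linarith

theorem klDiv'_nonneg {d : ℕ} {a b : Fin d → ℝ} (ha : a ∈ probSimplex d)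
    (hb : b ∈ probSimplex d) (hb₀ : ∀ i, 0 < b i) : 0 ≤ klDiv' a b := by
  nlinarith [sq_sum_abs_sub_le_two_mul_klDiv' ha hb hb₀, sq_nonneg (∑ i, |a i - b i|)]

theorem klDiv'_self {d : ℕ} {a : Fin d → ℝ} (ha : ∀ i, 0 < a i) : klDiv' a a = 0 :=
  sum_eq_zero fun i _ => by rw [div_self (ha i).ne', log_one, mul_zero]

section Calculus

variable {E : Type*} [NormedAddCommGroup E] [NormedSpace ℝ E] {f : E → ℝ} {s : Set E} {x y : E}

open AffineMap

theorem ConvexOn.add_fderiv_sub_le (hf : ConvexOn ℝ s f) (hx : x ∈ s) (hy : y ∈ s)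
    (hd : DifferentiableAt ℝ f x) : f x + fderiv ℝ f x (y - x) ≤ f y := by
  let c : ℝ →ᵃ[ℝ] E := lineMap x y
  have hc₀ : c 0 = x := lineMap_apply_zero x y
  have hc₁ : c 1 = y := lineMap_apply_one x y
  have hline : ConvexOn ℝ (c ⁻¹' s) (f ∘ c) := hf.comp_affineMap c
  have hderiv : HasDerivAt (f ∘ c) (fderiv ℝ f x (y - x)) 0 :=
    hd.hasFDerivAt.comp_hasDerivAt_of_eq 0 hasDerivAt_lineMap hc₀.symm
  have := hline.le_slope_of_hasDerivAt (by simpa [hc₀] using hx) (by simpa [hc₁] using hy)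
    one_pos hderiv
  simp only [slope_def_field, Function.comp_apply, hc₀, hc₁, sub_zero, div_one] at this
  linarith

theorem le_add_fderiv_sub_add_of_fderiv_sub_le (hs : Convex ℝ s) (hx : x ∈ s) (hy : y ∈ s)
    (hd : ∀ z ∈ s, DifferentiableAt ℝ f z) {B : ℝ}
    (hB : ∀ t ∈ Set.Ioo (0 : ℝ) 1,
      fderiv ℝ f (lineMap x y t) (y - x) - fderiv ℝ f x (y - x) ≤ B * t) :
    f y ≤ f x + fderiv ℝ f x (y - x) + B / 2 := by
  set D := fderiv ℝ f x (y - x)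
  have hmem : ∀ t ∈ Set.Icc (0 : ℝ) 1, lineMap x y t ∈ s := fun t ht => hs.lineMap_mem hx hy ht
  have hψ : ∀ t ∈ Set.Icc (0 : ℝ) 1, HasDerivAt (fun t => f (lineMap x y t) - t * D - B / 2 * t ^ 2)
      (fderiv ℝ f (lineMap x y t) (y - x) - D - B * t) t := by
    intro t ht
    have := (((hd _ (hmem t ht)).hasFDerivAt.comp_hasDerivAt t hasDerivAt_lineMap).sub
      ((hasDerivAt_id' t).mul_const D)).sub (((hasDerivAt_id' t).pow 2).const_mul (B / 2))
    exact this.congr_deriv (by push_cast; ring)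
  have hanti : AntitoneOn (fun t => f (lineMap x y t) - t * D - B / 2 * t ^ 2) (Set.Icc 0 1) := by
    refine antitoneOn_of_hasDerivWithinAt_nonpos (convex_Icc 0 1)
      (f' := fun t => fderiv ℝ f (lineMap x y t) (y - x) - D - B * t)
      (fun t ht => (hψ t ht).continuousAt.continuousWithinAt) ?_ ?_ <;>
      rw [interior_Icc] <;> intro t ht
    · exact (hψ t (Set.Ioo_subset_Icc_self ht)).hasDerivWithinAt
    · linarith [hB t ht]
  have := hanti (Set.left_mem_Icc.2 zero_le_one) (Set.right_mem_Icc.2 zero_le_one) zero_le_one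
  simp only [lineMap_apply_one, lineMap_apply_zero] at this
  linarith

end Calculus

theorem sum_mul_le_sum_abs_mul {ι : Type*} (s : Finset ι) {v w : ι → ℝ} {c : ℝ}
    (hw : ∀ j ∈ s, |w j| ≤ c) : ∑ j ∈ s, v j * w j ≤ (∑ j ∈ s, |v j|) * c := by
  rw [sum_mul]
  refine sum_le_sum fun j hj => ?_
  calc v j * w j ≤ |v j| * |w j| := by rw [← abs_mul]; exact le_abs_self _
    _ ≤ |v j| * c := mul_le_mul_of_nonneg_left (hw j hj) (abs_nonneg _)

theorem convex_probSimplex (d : ℕ) : Convex ℝ (probSimplex d) := convex_stdSimplex ℝ (Fin d)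

section Coordinates

variable {d : ℕ}

theorem fderiv_apply_eq_sum_piGrad (f : (Fin d → ℝ) → ℝ) (x h : Fin d → ℝ) :
    fderiv ℝ f x h = ∑ j, h j * piGrad f x j := by
  conv_lhs => rw [pi_eq_sum_univ' h, map_sum]
  simp [piGrad]

def IsL1SmoothOn (f : (Fin d → ℝ) → ℝ) (L : ℝ) (s : Set (Fin d → ℝ)) : Prop :=
  ∀ x ∈ s, ∀ y ∈ s, ∀ j, |piGrad f x j - piGrad f y j| ≤ L * ∑ i, |x i - y i|

theorem IsL1SmoothOn.le_add_sum_add {f : (Fin d → ℝ) → ℝ} {L : ℝ} {s : Set (Fin d → ℝ)}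
    (hf : IsL1SmoothOn f L s) (hs : Convex ℝ s) (hd : ∀ z ∈ s, DifferentiableAt ℝ f z)
    {x y : Fin d → ℝ} (hx : x ∈ s) (hy : y ∈ s) :
    f y ≤ f x + ∑ j, (y j - x j) * piGrad f x j + L / 2 * (∑ j, |y j - x j|) ^ 2 := by
  have := le_add_fderiv_sub_add_of_fderiv_sub_le hs hx hy hd (B := L * (∑ j, |y j - x j|) ^ 2)
    fun t ht => ?_
  · rw [fderiv_apply_eq_sum_piGrad] at this
    simp only [Pi.sub_apply] at this
    linarith
  set z := AffineMap.lineMap x y t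
  have hz : ∑ i, |z i - x i| = t * ∑ j, |y j - x j| := by
    rw [mul_sum]
    refine sum_congr rfl fun i _ => ?_
    rw [show z i - x i = t * (y i - x i) by simp [z, AffineMap.lineMap_apply], abs_mul,
      abs_of_pos ht.1]
  rw [fderiv_apply_eq_sum_piGrad, fderiv_apply_eq_sum_piGrad, ← sum_sub_distrib]
  calc ∑ j, ((y - x) j * piGrad f z j - (y - x) j * piGrad f x j)
      = ∑ j, (y j - x j) * (piGrad f z j - piGrad f x j) :=
        sum_congr rfl fun j _ => by rw [Pi.sub_apply]; ring
    _ ≤ (∑ j, |y j - x j|) * (L * ∑ i, |z i - x i|) :=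
        sum_mul_le_sum_abs_mul _ fun j _ =>
          hf z (hs.lineMap_mem hx hy ⟨ht.1.le, ht.2.le⟩) x hx j
    _ = L * (∑ j, |y j - x j|) ^ 2 * t := by rw [hz]; ring

end Coordinates

section GLM

variable {n d : ℕ}

theorem convexOn_glmObj (X : Matrix (Fin n) (Fin d) ℝ) (Y : Fin n → ℝ) {A : ℝ → ℝ}
    (hA : ConvexOn ℝ Set.univ A) : ConvexOn ℝ Set.univ (glmObj X Y A) := by
  have hterm : ∀ i, ConvexOn ℝ Set.univ
      fun θ : Fin d → ℝ => A (X.mulVec θ i) - Y i * X.mulVec θ i :=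
    fun i => (hA.sub ((LinearMap.mulLeft ℝ (Y i)).concaveOn convex_univ)).comp_linearMap
      (LinearMap.proj (R := ℝ) (φ := fun _ => ℝ) i ∘ₗ X.mulVecLin)
  have hsum := Finset.sum_induction _ (ConvexOn ℝ Set.univ) (fun _ _ => ConvexOn.add)
    (convexOn_const 0 convex_univ) fun i (_ : i ∈ univ) => hterm i
  have hglm : glmObj X Y A = fun θ => (1 / n : ℝ) • (∑ i, fun θ : Fin d → ℝ =>
      A (X.mulVec θ i) - Y i * X.mulVec θ i) θ := by
    ext θ
    simp only [glmObj, Finset.sum_apply, sum_sub_distrib, smul_eq_mul]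
    ring
  rw [hglm]
  exact hsum.smul (by positivity)

theorem glmObj_eq_add_sum (X : Matrix (Fin n) (Fin d) ℝ) (Y μ : Fin n → ℝ) (A : ℝ → ℝ)
    (θ : Fin d → ℝ) :
    glmObj X μ A θ
      = glmObj X Y A θ + ∑ j, θ j * (X.transpose.mulVec (fun i => Y i - μ i) j / n) := by
  have hswap : ∑ j, θ j * (X.transpose.mulVec (fun i => Y i - μ i) j / n)
      = (∑ i, (Y i - μ i) * X.mulVec θ i) / n := by
    simp_rw [mul_div_assoc', ← sum_div]
    congr 1
    exact (dotProduct_comm _ _).trans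
      (by rw [Matrix.mulVec_transpose, ← Matrix.dotProduct_mulVec]; rfl)
  rw [hswap, glmObj, glmObj]
  simp only [sub_mul, sum_sub_distrib]
  ring

end GLM

theorem klDiv'_sub_klDiv' {d : ℕ} {a b c : Fin d → ℝ} (ha : ∀ i, 0 ≤ a i) (hb : ∀ i, 0 < b i)
    (hc : ∀ i, 0 < c i) : klDiv' a b - klDiv' a c = ∑ i, a i * log (c i / b i) := by
  rw [klDiv', klDiv', ← sum_sub_distrib]
  refine sum_congr rfl fun i _ => ?_
  rcases (ha i).eq_or_lt with h | h
  · simp [← h]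
  · rw [log_div h.ne' (hb i).ne', log_div h.ne' (hc i).ne', log_div (hc i).ne' (hb i).ne']
    ring

section ExponentiatedGradient

variable {d : ℕ} {η : ℝ} {g p : Fin d → ℝ}

noncomputable def egStep (η : ℝ) (g p : Fin d → ℝ) : Fin d → ℝ :=
  fun i => p i * exp (-η * g i) / ∑ j, p j * exp (-η * g j)

variable [Nonempty (Fin d)]

theorem egStep_normalizer_pos (hp : ∀ i, 0 < p i) : 0 < ∑ j, p j * exp (-η * g j) :=
  sum_pos (fun j _ => mul_pos (hp j) (exp_pos _)) univ_nonempty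

theorem egStep_pos (hp : ∀ i, 0 < p i) (i : Fin d) : 0 < egStep η g p i :=
  div_pos (mul_pos (hp i) (exp_pos _)) (egStep_normalizer_pos hp)

theorem egStep_mem_probSimplex (hp : ∀ i, 0 < p i) : egStep η g p ∈ probSimplex d :=
  ⟨fun i => (egStep_pos hp i).le, by
    simp only [egStep]
    rw [← sum_div, div_self (egStep_normalizer_pos hp).ne']⟩

theorem log_egStep_div (hp : ∀ i, 0 < p i) (i : Fin d) :
    log (egStep η g p i / p i) = -η * g i - log (∑ j, p j * exp (-η * g j)) := by
  have h : egStep η g p i / p i = exp (-η * g i) / ∑ j, p j * exp (-η * g j) := by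
    simp only [egStep]
    field_simp [(hp i).ne']
  rw [h, log_div (exp_pos _).ne' (egStep_normalizer_pos hp).ne', log_exp]

theorem sum_mul_log_egStep_div (hp : ∀ i, 0 < p i) {v : Fin d → ℝ} (hv : ∑ i, v i = 1) :
    ∑ i, v i * log (egStep η g p i / p i)
      = -η * ∑ i, v i * g i - log (∑ j, p j * exp (-η * g j)) := by
  simp_rw [log_egStep_div hp, mul_sub, sum_sub_distrib, ← sum_mul, hv, one_mul, mul_sum]
  congr 1
  exact sum_congr rfl fun i _ => by ring

/-- The three-point identity of mirror descent with the KL divergence. -/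
theorem klDiv'_sub_klDiv'_egStep_sub_klDiv' (hp : ∀ i, 0 < p i) {u : Fin d → ℝ}
    (hu : u ∈ probSimplex d) :
    klDiv' u p - klDiv' u (egStep η g p) - klDiv' (egStep η g p) p
      = η * ∑ j, (egStep η g p j - u j) * g j := by
  rw [klDiv'_sub_klDiv' hu.1 hp (egStep_pos hp), klDiv', sum_mul_log_egStep_div hp hu.2,
    sum_mul_log_egStep_div hp (egStep_mem_probSimplex hp).2]
  simp only [sub_mul, sum_sub_distrib]
  ring

end ExponentiatedGradient

theorem Antitone.mul_sub_le_telescope {a D : ℕ → ℝ} {c : ℝ} (ha : Antitone a)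
    (h : ∀ t, a (t + 1) - c ≤ D t - D (t + 1)) (T : ℕ) : T * (a T - c) ≤ D 0 - D T := by
  calc (T : ℝ) * (a T - c) = ∑ t ∈ range T, (a T - c) := by simp [mul_sub]
    _ ≤ ∑ t ∈ range T, (D t - D (t + 1)) := sum_le_sum fun t ht =>
        (sub_le_sub_right (ha (mem_range.1 ht)) c).trans (h t)
    _ = D 0 - D T := sum_range_sub' D T

section MirrorDescent

variable {d : ℕ} [Nonempty (Fin d)] {f : (Fin d → ℝ) → ℝ} {L η : ℝ}

theorem egStep_iterate_mem {θ g : ℕ → Fin d → ℝ} (hθ₀ : θ 0 ∈ probSimplex d)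
    (hθ₀pos : ∀ i, 0 < θ 0 i) (hθ : ∀ t, θ (t + 1) = egStep η (g t) (θ t)) (t : ℕ) :
    θ t ∈ probSimplex d ∧ ∀ i, 0 < θ t i := by
  induction t with
  | zero => exact ⟨hθ₀, hθ₀pos⟩
  | succ t ih => rw [hθ t]; exact ⟨egStep_mem_probSimplex ih.2, egStep_pos ih.2⟩

theorem mul_egStep_sub_le_klDiv'_sub (hconv : ConvexOn ℝ (probSimplex d) f)
    (hd : ∀ z ∈ probSimplex d, DifferentiableAt ℝ f z) (hf : IsL1SmoothOn f L (probSimplex d))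
    (hη : 0 ≤ η) (hηL : η * L ≤ 1) {p u : Fin d → ℝ} (hp : p ∈ probSimplex d)
    (hp₀ : ∀ i, 0 < p i) (hu : u ∈ probSimplex d) :
    η * (f (egStep η (piGrad f p) p) - f u) ≤ klDiv' u p - klDiv' u (egStep η (piGrad f p) p) := by
  set q := egStep η (piGrad f p) p
  have hq : q ∈ probSimplex d := egStep_mem_probSimplex hp₀
  have hdescent := hf.le_add_sum_add (convex_probSimplex d) hd hp hq
  have hsupport := hconv.add_fderiv_sub_le hp hu (hd p hp)
  rw [fderiv_apply_eq_sum_piGrad] at hsupport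
  have hpinsker := sq_sum_abs_sub_le_two_mul_klDiv' hq hp hp₀
  have hkl := klDiv'_nonneg hq hp hp₀
  have hthree := klDiv'_sub_klDiv'_egStep_sub_klDiv' (η := η) (g := piGrad f p) hp₀ hu
  have hlin : ∑ j, (q j - p j) * piGrad f p j - ∑ j, (u - p) j * piGrad f p j
      = ∑ j, (q j - u j) * piGrad f p j := by
    rw [← sum_sub_distrib]
    exact sum_congr rfl fun j _ => by rw [Pi.sub_apply]; ring
  -- Pinsker and `ηL ≤ 1` let `KL(q, p)` absorb the quadratic term of the descent lemma.
  have hquad : η * (L / 2 * (∑ j, |q j - p j|) ^ 2) ≤ klDiv' q p := by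
    rcases le_total 0 L with hL | hL
    · nlinarith [mul_le_mul_of_nonneg_left hpinsker (mul_nonneg hη hL)]
    · nlinarith [mul_nonpos_of_nonneg_of_nonpos hη hL, sq_nonneg (∑ j, |q j - p j|)]
  have := mul_le_mul_of_nonneg_left
    (show f q - f u ≤ ∑ j, (q j - u j) * piGrad f p j + L / 2 * (∑ j, |q j - p j|) ^ 2 by
      linarith) hη
  linarith

theorem egd_mul_sub_le_klDiv'_sub (hconv : ConvexOn ℝ (probSimplex d) f)
    (hd : ∀ z ∈ probSimplex d, DifferentiableAt ℝ f z) (hf : IsL1SmoothOn f L (probSimplex d))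
    (hη : 0 ≤ η) (hηL : η * L ≤ 1) {θ : ℕ → Fin d → ℝ}
    (hθ₀ : θ 0 ∈ probSimplex d) (hθ₀pos : ∀ i, 0 < θ 0 i)
    (hθ : ∀ t, θ (t + 1) = egStep η (piGrad f (θ t)) (θ t)) {u : Fin d → ℝ}
    (hu : u ∈ probSimplex d) (T : ℕ) :
    T * (η * (f (θ T) - f u)) ≤ klDiv' u (θ 0) - klDiv' u (θ T) := by
  have hmem := egStep_iterate_mem hθ₀ hθ₀pos hθ
  have hstep : ∀ t {v}, v ∈ probSimplex d →
      η * (f (θ (t + 1)) - f v) ≤ klDiv' v (θ t) - klDiv' v (θ (t + 1)) := fun t v hv => by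
    rw [hθ t]
    exact mul_egStep_sub_le_klDiv'_sub hconv hd hf hη hηL (hmem t).1 (hmem t).2 hv
  have hanti : Antitone fun t => η * f (θ t) := antitone_nat_of_succ_le fun t => by
    have := hstep t (hmem t).1
    rw [klDiv'_self (hmem t).2] at this
    linarith [klDiv'_nonneg (hmem t).1 (hmem (t + 1)).1 (hmem (t + 1)).2]
  simpa only [mul_sub] using hanti.mul_sub_le_telescope (c := η * f u)
    (fun t => by simpa only [mul_sub] using hstep t hu) T

end MirrorDescent

theorem mul_le_half_mul_sq_add_of_sq_le {s W K a : ℝ} (ha : 0 < a) (hW : W ^ 2 ≤ 2 * K) :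
    s * W ≤ a / 2 * s ^ 2 + 1 / a * K := by
  rw [← mul_le_mul_iff_right₀ ha]
  calc a * (s * W) ≤ a ^ 2 * s ^ 2 / 2 + W ^ 2 / 2 := by nlinarith [sq_nonneg (a * s - W)]
    _ ≤ a * (a / 2 * s ^ 2 + 1 / a * K) := by field_simp; linarith

theorem sum_mul_sub_sum_mul_le {d : ℕ} {a b v : Fin d → ℝ} {c : ℝ} (hc : 0 < c)
    (ha : a ∈ probSimplex d) (hb : b ∈ probSimplex d) (hb₀ : ∀ i, 0 < b i) :
    ∑ j, b j * v j - ∑ j, a j * v j ≤ c / 2 * (⨆ j, |v j|) ^ 2 + 1 / c * klDiv' a b := by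
  have hholder : ∑ j, (b j - a j) * v j ≤ (⨆ j, |v j|) * ∑ j, |a j - b j| := by
    rw [mul_comm]
    simp_rw [abs_sub_comm (a _)]
    exact sum_mul_le_sum_abs_mul _ fun j _ =>
      le_ciSup (f := fun j => |v j|) (Set.finite_range _).bddAbove j
  rw [← sum_sub_distrib]
  simp_rw [← sub_mul]
  exact hholder.trans
    (mul_le_half_mul_sq_add_of_sq_le hc (sq_sum_abs_sub_le_two_mul_klDiv' ha hb hb₀))

theorem egd_glm_risk_bound_general {n d : ℕ}
    (X : Matrix (Fin n) (Fin d) ℝ) (Y μ : Fin n → ℝ)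
    (A : ℝ → ℝ) (hA : ConvexOn ℝ Set.univ A)
    (hdiff : ∀ θ ∈ probSimplex d, DifferentiableAt ℝ (glmObj X Y A) θ)
    (L : ℝ)
    (hsmooth : ∀ x ∈ probSimplex d, ∀ y ∈ probSimplex d, ∀ j,
      |piGrad (glmObj X Y A) x j - piGrad (glmObj X Y A) y j| ≤ L * ∑ i, |x i - y i|)
    (η : ℝ) (hη : 0 < η ∧ η ≤ 1 / L)
    (θseq : ℕ → Fin d → ℝ)
    (hθ0_mem : θseq 0 ∈ probSimplex d) (hθ0_pos : ∀ i, 0 < θseq 0 i)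
    (hupd : ∀ t i, θseq (t + 1) i =
      θseq t i * Real.exp (-η * piGrad (glmObj X Y A) (θseq t) i) /
        ∑ j, θseq t j * Real.exp (-η * piGrad (glmObj X Y A) (θseq t) j))
    (T : ℕ) (hT : 1 ≤ T)
    (θ : Fin d → ℝ) (hθ : θ ∈ probSimplex d) :
    glmObj X μ A (θseq T) - glmObj X μ A θ ≤
      η * T / 2 * (⨆ j, |X.transpose.mulVec (fun i => Y i - μ i) j / n|) ^ 2
        + (1 / (η * T)) * klDiv' θ (θseq 0) := by
  have : Nonempty (Fin d) := ⟨⟨0, Nat.pos_of_ne_zero fun h => by subst h; simp [probSimplex] at hθ⟩⟩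
  have hL : 0 < L := one_div_pos.mp (hη.1.trans_le hη.2)
  have hηL : η * L ≤ 1 := (le_div_iff₀ hL).mp (by simpa using hη.2)
  have hθseq : ∀ t, θseq (t + 1) = egStep η (piGrad (glmObj X Y A) (θseq t)) (θseq t) :=
    fun t => funext (hupd t)
  have hηT : 0 < η * T := mul_pos hη.1 (by exact_mod_cast hT)
  have hmem := egStep_iterate_mem hθ0_mem hθ0_pos hθseq T
  have hopt := egd_mul_sub_le_klDiv'_sub
    ((convexOn_glmObj X Y hA).subset (Set.subset_univ _) (convex_probSimplex d)) hdiff hsmooth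
    hη.1.le hηL hθ0_mem hθ0_pos hθseq hθ T
  have hloss : glmObj X Y A (θseq T) - glmObj X Y A θ
      ≤ 1 / (η * T) * (klDiv' θ (θseq 0) - klDiv' θ (θseq T)) := by
    rw [one_div_mul_eq_div, le_div_iff₀ hηT]
    linarith
  have hnoise := sum_mul_sub_sum_mul_le
    (v := fun j => X.transpose.mulVec (fun i => Y i - μ i) j / n) hηT hθ hmem.1 hmem.2
  rw [glmObj_eq_add_sum X Y μ A, glmObj_eq_add_sum X Y μ A]
  linarith

/-- **Risk bound for exponentiated gradient descent on a GLM.**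
Fix `X`, `Y`, `μ` and a convex cumulant `A`, and assume the GLM loss `ℓ` is `L`-smooth with
respect to `‖·‖₁` on the probability simplex (`‖∇ℓ(x) − ∇ℓ(y)‖_∞ ≤ L ‖x − y‖₁`). Let
`θseq` be exponentiated gradient descent iterates for `ℓ`, initialized at
`θseq 0 ∈ int Δ_d` with constant step size `η ∈ (0, 1/L]`, and set `λ_T := 1/(ηT)`. Then
for every `T ≥ 1` and every `θ ∈ Δ_d` with `D_KL(θ, θseq 0) < ∞` (automatic here since
`θseq 0` has positive coordinates):
`Risk(θseq T) − Risk(θ) ≤ (1/(2λ_T)) ‖Xᵀε/n‖_∞² + λ_T · D_KL(θ, θseq 0)`. -/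
theorem egd_glm_risk_bound {n d : ℕ} (hn : 0 < n)
    (X : Matrix (Fin n) (Fin d) ℝ) (Y μ : Fin n → ℝ)
    (A : ℝ → ℝ) (hA : ConvexOn ℝ Set.univ A)
    (hdiff : ∀ θ ∈ probSimplex d, DifferentiableAt ℝ (glmObj X Y A) θ)
    (L : ℝ) (hL : 0 < L)
    (hsmooth : ∀ x ∈ probSimplex d, ∀ y ∈ probSimplex d, ∀ j,
      |piGrad (glmObj X Y A) x j - piGrad (glmObj X Y A) y j| ≤ L * ∑ i, |x i - y i|)
    (η : ℝ) (hη : 0 < η ∧ η ≤ 1 / L)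
    (θseq : ℕ → Fin d → ℝ)
    (hθ0_mem : θseq 0 ∈ probSimplex d) (hθ0_pos : ∀ i, 0 < θseq 0 i)
    (hupd : ∀ t i, θseq (t + 1) i =
      θseq t i * Real.exp (-η * piGrad (glmObj X Y A) (θseq t) i) /
        ∑ j, θseq t j * Real.exp (-η * piGrad (glmObj X Y A) (θseq t) j))
    (T : ℕ) (hT : 1 ≤ T)
    (θ : Fin d → ℝ) (hθ : θ ∈ probSimplex d) :
    glmObj X μ A (θseq T) - glmObj X μ A θ ≤
      η * T / 2 * (⨆ j, |X.transpose.mulVec (fun i => Y i - μ i) j / n|) ^ 2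
        + (1 / (η * T)) * klDiv' θ (θseq 0) :=
  egd_glm_risk_bound_general X Y μ A hA hdiff L hsmooth η hη θseq hθ0_mem hθ0_pos hupd T hT θ hθ
end
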